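/- Let σ ∈ S_{m+1} be a permutation of full support whose unique left descent is s_m (the transposition (m, m+1)). Then σ = s_m s_{m-1} ⋯ s_2 s_1, i.e., σ is the descending Coxeter element. -/

import Mathlib

/-!
Work with the letters `0, …, m`, so that `s_{i+1}` swaps `i` and `i + 1` (this is `cs.simple i`).
Since the Coxeter length is the number of inversions, `s_{i+1}` is a left descent of `σ` iff
`σ⁻¹ (i + 1) < σ⁻¹ i`. If only `s_m` can be a descent, `σ⁻¹` is increasing on `0, …, m - 1`, and
full support (`s_1` occurs in a reduced word) prevents `σ⁻¹` from fixing `0`. The only such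
permutation is the rotation `x ↦ x + 1 mod (m + 1)`, which is `s_1 s_2 ⋯ s_m`; inverting gives
`s_m ⋯ s_1`.
-/

/-- The support of `w`: the set of simple reflection indices appearing in some
(equivalently, any) reduced word for `w`. -/
def CoxeterSystem.supp {B W : Type*} [Group W] {M : CoxeterMatrix B}
    (cs : CoxeterSystem M W) (w : W) : Set B :=
  { i | ∃ ω : List B, cs.IsReduced ω ∧ cs.wordProd ω = w ∧ i ∈ ω }

open Equiv Finset

theorem Fin.castSucc_covBy_succ {n : ℕ} (i : Fin n) : i.castSucc ⋖ i.succ :=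
  ⟨Fin.castSucc_lt_succ, fun c h₁ h₂ => by
    simp only [Fin.lt_def, Fin.val_succ, Fin.val_castSucc] at h₁ h₂
    omega⟩

theorem Fin.coe_cycleRange {n : ℕ} (i j : Fin n) :
    (cycleRange i j : ℕ) = if j < i then (j : ℕ) + 1 else if j = i then 0 else j := by
  rcases le_or_gt j i with h | h
  · rw [coe_cycleRange_of_le h]
    split_ifs <;> omega
  · rw [cycleRange_of_gt h, if_neg h.not_gt, if_neg h.ne']

theorem Fin.cycleRange_succ {n : ℕ} (i : Fin n) :
    cycleRange i.succ = cycleRange i.castSucc * swap i.castSucc i.succ := by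
  ext j
  rw [Perm.mul_apply, swap_apply_def]
  split_ifs with h₁ h₂ <;>
    simp only [coe_cycleRange, Fin.lt_def, Fin.ext_iff, Fin.val_succ, Fin.val_castSucc] at * <;>
    split_ifs <;> omega

namespace Equiv.Perm

variable {α : Type*} [LinearOrder α]

theorem swap_apply_lt_swap_apply_of_covBy {a b x y : α} (hab : a ⋖ b) (hxy : x < y)
    (hne : (x, y) ≠ (a, b)) : swap a b x < swap a b y := by
  have hab' := hab.lt
  rcases eq_or_ne x a with rfl | hxa
  · have hyb : y ≠ b := fun h => hne (by rw [h])
    rw [swap_apply_left, swap_apply_of_ne_of_ne hxy.ne' hyb]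
    exact (hab.ge_of_gt hxy).lt_of_ne hyb.symm
  rcases eq_or_ne x b with rfl | hxb
  · rw [swap_apply_right, swap_apply_of_ne_of_ne (hab'.trans hxy).ne' hxy.ne']
    exact hab'.trans hxy
  rw [swap_apply_of_ne_of_ne hxa hxb]
  rcases eq_or_ne y a with rfl | hya
  · rw [swap_apply_left]; exact hxy.trans hab'
  rcases eq_or_ne y b with rfl | hyb
  · rw [swap_apply_right]; exact (hab.le_of_lt hxy).lt_of_ne hxa
  rwa [swap_apply_of_ne_of_ne hya hyb]

variable [Fintype α]

def inversions (σ : Perm α) : Finset (α × α) :=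
  {p | p.1 < p.2 ∧ σ p.2 < σ p.1}

@[simp]
theorem mem_inversions {σ : Perm α} {p : α × α} :
    p ∈ σ.inversions ↔ p.1 < p.2 ∧ σ p.2 < σ p.1 := by
  simp [inversions]

@[simp]
theorem inversions_one : (1 : Perm α).inversions = ∅ := by
  ext ⟨x, y⟩
  simp only [mem_inversions, Perm.one_apply, notMem_empty, iff_false, not_and]
  exact fun h => lt_asymm h

theorem inversions_swap_mul_of_lt {a b : α} (hab : a ⋖ b) {σ : Perm α}
    (h : σ⁻¹ a < σ⁻¹ b) :
    (swap a b * σ).inversions = insert (σ⁻¹ a, σ⁻¹ b) σ.inversions := by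
  ext ⟨x, y⟩
  simp only [mem_inversions, mem_insert, Perm.mul_apply, Prod.mk.injEq, Perm.eq_inv_iff_eq]
  constructor
  · rintro ⟨hxy, hlt⟩
    refine or_iff_not_imp_left.2 fun hne => ⟨hxy, ?_⟩
    refine (lt_or_gt_of_ne (σ.injective.ne hxy.ne')).resolve_right fun hσ => hlt.not_gt ?_
    exact swap_apply_lt_swap_apply_of_covBy hab hσ (by simpa using hne)
  · rintro (⟨rfl, rfl⟩ | ⟨hxy, hlt⟩)
    · exact ⟨by simpa using h, by simpa using hab.lt⟩
    · refine ⟨hxy, swap_apply_lt_swap_apply_of_covBy hab hlt ?_⟩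
      rintro ⟨⟩
      exact h.not_gt (by simpa using hxy)

theorem card_inversions_swap_mul_of_lt {a b : α} (hab : a ⋖ b) {σ : Perm α}
    (h : σ⁻¹ a < σ⁻¹ b) :
    #(swap a b * σ).inversions = #σ.inversions + 1 := by
  rw [inversions_swap_mul_of_lt hab h, card_insert_of_notMem]
  simpa using fun _ => hab.lt.le

theorem card_inversions_swap_mul_of_gt {a b : α} (hab : a ⋖ b) {σ : Perm α}
    (h : σ⁻¹ b < σ⁻¹ a) :
    #(swap a b * σ).inversions + 1 = #σ.inversions := by
  have h' : (swap a b * σ)⁻¹ a < (swap a b * σ)⁻¹ b := by simpa [swap_inv] using h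
  simpa [← mul_assoc] using (card_inversions_swap_mul_of_lt hab h').symm

theorem card_inversions_swap_mul_le {a b : α} (hab : a ⋖ b) (σ : Perm α) :
    #(swap a b * σ).inversions ≤ #σ.inversions + 1 := by
  rcases lt_or_gt_of_ne (σ⁻¹.injective.ne hab.lt.ne) with h | h
  · exact (card_inversions_swap_mul_of_lt hab h).le
  · have := card_inversions_swap_mul_of_gt hab h; omega

theorem eq_one_of_strictMono {σ : Perm α} (h : StrictMono σ) : σ = 1 := by
  have := Subsingleton.elim (h.orderIsoOfSurjective σ σ.surjective) (OrderIso.refl α)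
  ext x
  exact DFunLike.congr_fun this x

theorem eq_finRotate_of_strictMono_castSucc {n : ℕ} {τ : Perm (Fin (n + 1))}
    (hmono : StrictMono (τ ∘ Fin.castSucc)) (h0 : τ 0 ≠ 0) : τ = finRotate (n + 1) := by
  have hcast : ∀ k : Fin n, τ k.castSucc ≠ 0 := fun k hk => by
    have : NeZero n := NeZero.of_pos k.pos
    refine h0 (le_antisymm ?_ (Fin.zero_le _))
    simpa [hk] using hmono.monotone (Fin.zero_le k)
  have hlast : τ (Fin.last n) = 0 := by
    obtain ⟨x, hx⟩ := τ.surjective 0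
    induction x using Fin.lastCases with
    | last => exact hx
    | cast k => exact absurd hx (hcast k)
  have hrange : Set.range (τ ∘ Fin.castSucc) = Set.range Fin.succ := by
    rw [Fin.range_succ]
    ext y
    refine ⟨?_, fun hy => ?_⟩
    · rintro ⟨k, rfl⟩; exact hcast k
    · obtain ⟨x, rfl⟩ := τ.surjective y
      induction x using Fin.lastCases with
      | last => exact absurd hlast hy
      | cast k => exact ⟨k, rfl⟩
  have hsucc := (hmono.range_inj (Fin.strictMono_succ)).1 hrange
  ext x : 1
  induction x using Fin.lastCases with
  | last => rw [hlast, finRotate_last]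
  | cast k => rw [finRotate_apply, Fin.coeSucc_eq_succ, ← hsucc]; rfl

end Equiv.Perm

theorem CoxeterSystem.IsReduced.not_isLeftDescent_wordProd {B W : Type*} [Group W]
    {M : CoxeterMatrix B} {cs : CoxeterSystem M W} {i : B} {ω : List B}
    (h : cs.IsReduced (i :: ω)) : ¬cs.IsLeftDescent (cs.wordProd ω) i := by
  have hω : cs.IsReduced ω := by simpa using h.drop 1
  rw [CoxeterSystem.not_isLeftDescent_iff, ← cs.wordProd_cons, h.eq, hω.eq, List.length_cons]

namespace CoxeterSystem

variable {m : ℕ} {M : CoxeterMatrix (Fin m)} {cs : CoxeterSystem M (Perm (Fin (m + 1)))}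
  (hs : ∀ i : Fin m, cs.simple i = swap i.castSucc i.succ)
include hs

theorem card_inversions_wordProd_le (ω : List (Fin m)) :
    #(cs.wordProd ω).inversions ≤ ω.length := by
  induction ω with
  | nil => simp
  | cons i ω ih =>
    rw [wordProd_cons, hs, List.length_cons]
    exact (Perm.card_inversions_swap_mul_le (Fin.castSucc_covBy_succ i) _).trans (by omega)

theorem length_le_card_inversions (σ : Perm (Fin (m + 1))) : cs.length σ ≤ #σ.inversions := by
  induction hn : #σ.inversions using Nat.strong_induction_on generalizing σ with
  | _ n ih =>
  rcases eq_or_ne σ 1 with rfl | hσ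
  · simp
  obtain ⟨i, hi⟩ : ∃ i : Fin m, σ⁻¹ i.succ < σ⁻¹ i.castSucc := by
    by_contra! hmono
    refine hσ (inv_eq_one.1 (Perm.eq_one_of_strictMono (Fin.strictMono_iff_lt_succ.2 fun i => ?_)))
    exact (hmono i).lt_of_ne (σ⁻¹.injective.ne Fin.castSucc_lt_succ.ne)
  have hcard := Perm.card_inversions_swap_mul_of_gt (Fin.castSucc_covBy_succ i) hi
  calc cs.length σ = cs.length (cs.simple i * (cs.simple i * σ)) := by
        rw [simple_mul_simple_cancel_left]
    _ ≤ cs.length (cs.simple i) + cs.length (cs.simple i * σ) := cs.length_mul_le _ _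
    _ ≤ 1 + #(swap i.castSucc i.succ * σ).inversions := by
        rw [length_simple, hs]
        exact Nat.add_le_add_left (ih _ (by omega) _ rfl) 1
    _ = n := by omega

theorem length_eq_card_inversions (σ : Perm (Fin (m + 1))) : cs.length σ = #σ.inversions := by
  refine (length_le_card_inversions hs σ).antisymm ?_
  obtain ⟨ω, hω, rfl⟩ := cs.exists_isReduced σ
  exact hω.eq ▸ card_inversions_wordProd_le hs ω

theorem isLeftDescent_iff_inv_succ_lt (σ : Perm (Fin (m + 1))) (i : Fin m) :
    cs.IsLeftDescent σ i ↔ σ⁻¹ i.succ < σ⁻¹ i.castSucc := by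
  rw [isLeftDescent_iff, length_eq_card_inversions hs, length_eq_card_inversions hs, hs]
  rcases lt_or_gt_of_ne (σ⁻¹.injective.ne (Fin.castSucc_lt_succ (i := i)).ne) with h | h
  · rw [Perm.card_inversions_swap_mul_of_lt (Fin.castSucc_covBy_succ i) h]
    exact iff_of_false (by omega) h.not_gt
  · exact iff_of_true (Perm.card_inversions_swap_mul_of_gt (Fin.castSucc_covBy_succ i) h) h

theorem not_isLeftDescent_iff_inv_castSucc_lt (σ : Perm (Fin (m + 1))) (i : Fin m) :
    ¬cs.IsLeftDescent σ i ↔ σ⁻¹ i.castSucc < σ⁻¹ i.succ := by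
  rw [isLeftDescent_iff_inv_succ_lt hs, not_lt]
  exact (σ⁻¹.injective.ne (Fin.castSucc_lt_succ (i := i)).ne).le_iff_lt

theorem wordProd_apply_zero_ne_zero {ω : List (Fin m)} (hω : cs.IsReduced ω) {i : Fin m}
    (hi : i ∈ ω) (hi0 : i.castSucc = 0) : cs.wordProd ω 0 ≠ 0 := by
  induction ω with
  | nil => simp at hi
  | cons j ω ih =>
    have hlt := (not_isLeftDescent_iff_inv_castSucc_lt hs _ j).1 hω.not_isLeftDescent_wordProd
    rw [wordProd_cons, hs, Perm.mul_apply, Ne, swap_apply_eq_iff]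
    by_cases hj0 : j.castSucc = 0
    · -- for the tail `τ`, `s_1 τ` fixes `0` only if `τ⁻¹ 1 = 0`, impossible as `τ⁻¹ 0 < τ⁻¹ 1`
      rw [← hj0, swap_apply_left]
      intro h
      rw [← Perm.eq_inv_iff_eq.2 h, hj0] at hlt
      exact Fin.not_lt_zero _ hlt
    · rw [swap_apply_of_ne_of_ne (Ne.symm hj0) (Fin.succ_ne_zero j).symm]
      refine ih (by simpa using hω.drop 1) ?_
      rcases List.mem_cons.1 hi with rfl | hi
      · exact absurd hi0 hj0
      · exact hi

theorem wordProd_take_finRange (k : ℕ) (hk : k ≤ m) :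
    cs.wordProd ((List.finRange m).take k) = Fin.cycleRange ⟨k, Nat.lt_succ_of_le hk⟩ := by
  induction k with
  | zero => simp [wordProd_nil]
  | succ k ih =>
    rw [List.take_succ_eq_append_getElem (by simpa using hk), wordProd_append, ih (by omega),
      List.getElem_finRange, wordProd_singleton, hs]
    exact (Fin.cycleRange_succ ⟨k, hk⟩).symm

theorem wordProd_finRange : cs.wordProd (List.finRange m) = finRotate (m + 1) := by
  have := wordProd_take_finRange hs m le_rfl
  rwa [List.take_of_length_le (by simp), show (⟨m, _⟩ : Fin (m + 1)) = Fin.last m from rfl,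
    Fin.cycleRange_last] at this

end CoxeterSystem

/-- A permutation in `S_{m+1}` of full support whose unique left descent is the last
simple reflection `s_m` is the descending Coxeter element `s_m s_{m-1} ⋯ s_1`. -/
theorem stmt_1 {m : ℕ} (hm : 1 ≤ m)
    (cs : CoxeterSystem (CoxeterMatrix.Aₙ m) (Equiv.Perm (Fin (m + 1))))
    (hs : ∀ i : Fin m, cs.simple i = Equiv.swap i.castSucc i.succ)
    (σ : Equiv.Perm (Fin (m + 1)))
    (hfull : cs.supp σ = Set.univ)
    (huniq : ∀ i : Fin m, cs.IsLeftDescent σ i → i = ⟨m - 1, by omega⟩) :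
    σ = cs.wordProd ((List.finRange m).reverse) := by
  obtain ⟨n, rfl⟩ : ∃ n, m = n + 1 := ⟨m - 1, by omega⟩
  have hfix : σ⁻¹ 0 ≠ 0 := by
    obtain ⟨ω, hω, rfl, h0⟩ : (0 : Fin (n + 1)) ∈ cs.supp σ := hfull ▸ Set.mem_univ _
    rw [Ne, Perm.inv_eq_iff_eq, eq_comm]
    exact CoxeterSystem.wordProd_apply_zero_ne_zero hs hω h0 rfl
  have hmono : StrictMono (⇑σ⁻¹ ∘ Fin.castSucc) := by
    refine Fin.strictMono_iff_lt_succ.2 fun i => ?_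
    have hi : ¬cs.IsLeftDescent σ i.castSucc := fun h => by
      have := congrArg Fin.val (huniq _ h)
      simp only [Fin.val_castSucc] at this
      omega
    rw [Function.comp_apply, Function.comp_apply, ← Fin.succ_castSucc]
    exact (CoxeterSystem.not_isLeftDescent_iff_inv_castSucc_lt hs σ _).1 hi
  rw [cs.wordProd_reverse, CoxeterSystem.wordProd_finRange hs,
    ← Perm.eq_finRotate_of_strictMono_castSucc hmono hfix, inv_inv]
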